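/- At every x ∈ U the vector field A is differentiable, and its curl equals the gradient of 1/‖x − a‖: for every cyclic permutation (i, j, k) of (1, 2, 3), ∂ⱼA_k(x) − ∂_kAⱼ(x) = −(xᵢ − aᵢ)/‖x − a‖³. (This is the statement that the 1-form βᵢ = ((z − zᵢ)/rᵢ)·dφᵢ satisfies ⋆₃ dβᵢ = d(1/rᵢ) on ℝ³ with the euclidean metric, used to integrate the equations ⋆₃dχ = dH and ⋆₃dξ = −dK for multi-centred harmonic functions.) -/

import Mathlib

/-- The vector field `A(x) = ((x₃−a₃)/‖x−a‖) (−(x₂−a₂), x₁−a₁, 0)/((x₁−a₁)² + (x₂−a₂)²)`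
on the complement of the vertical line through `a` (indices `0,1,2` in Lean correspond to
`1,2,3`); it corresponds to the 1-form `β = ((z−a₃)/‖x−a‖) dφ`. -/
noncomputable def diracStringField (a : EuclideanSpace ℝ (Fin 3)) (x : EuclideanSpace ℝ (Fin 3)) :
    EuclideanSpace ℝ (Fin 3) :=
  ((x 2 - a 2) / ‖x - a‖ / ((x 0 - a 0) ^ 2 + (x 1 - a 1) ^ 2)) •
    (WithLp.equiv 2 (Fin 3 → ℝ)).symm ![-(x 1 - a 1), x 0 - a 0, 0]

private lemma norm_coords (z a : EuclideanSpace ℝ (Fin 3)) :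
    ‖z - a‖ = Real.sqrt ((z 0 - a 0) ^ 2 + ((z 1 - a 1) ^ 2 + (z 2 - a 2) ^ 2)) := by
  rw [EuclideanSpace.norm_eq]; simp [Fin.sum_univ_three, add_assoc]

private lemma mydiv {f g : EuclideanSpace ℝ (Fin 3) → ℝ} {x : EuclideanSpace ℝ (Fin 3)}
    (hf : DifferentiableAt ℝ f x) (hg : DifferentiableAt ℝ g x) (h : g x ≠ 0) :
    DifferentiableAt ℝ (fun y => f y / g y) x := by
  simp only [div_eq_mul_inv]; exact hf.mul (hg.inv h)

private lemma key {g : EuclideanSpace ℝ (Fin 3) → ℝ} {x e : EuclideanSpace ℝ (Fin 3)} {d : ℝ}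
    (hg : DifferentiableAt ℝ g x) (h : HasDerivAt (fun t : ℝ => g (x + t • e)) d 0) :
    fderiv ℝ g x e = d := by
  have hpath : HasDerivAt (fun t : ℝ => x + t • e) e 0 := by
    simpa using ((hasDerivAt_id (0:ℝ)).smul_const e).const_add x
  have hg' : HasFDerivAt g (fderiv ℝ g x) (x + (0:ℝ) • e) := by
    rw [show x + (0:ℝ) • e = x by simp]; exact hg.hasFDerivAt
  have h2 : HasDerivAt (fun t : ℝ => g (x + t • e)) (fderiv ℝ g x e) 0 :=
    HasFDerivAt.comp_hasDerivAt 0 hg' hpath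
  exact h2.unique h

private lemma auxA (u v w c : ℝ) (hq : 0 < u ^ 2 + v ^ 2) :
    HasDerivAt (fun t : ℝ => (w + t) / Real.sqrt (u ^ 2 + (v ^ 2 + (w + t) ^ 2)) / (u ^ 2 + v ^ 2) * c)
      (c / Real.sqrt (u ^ 2 + (v ^ 2 + w ^ 2)) ^ 3) 0 := by
  have hrpos : 0 < Real.sqrt (u ^ 2 + (v ^ 2 + w ^ 2)) :=
    Real.sqrt_pos.mpr (by nlinarith [sq_nonneg w])
  have hr2 : Real.sqrt (u ^ 2 + (v ^ 2 + w ^ 2)) ^ 2 = u ^ 2 + (v ^ 2 + w ^ 2) :=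
    Real.sq_sqrt (by positivity)
  have hlin : HasDerivAt (fun t : ℝ => w + t) 1 0 := (hasDerivAt_id 0).const_add w
  have hs : HasDerivAt (fun t : ℝ => u ^ 2 + (v ^ 2 + (w + t) ^ 2))
      ((2:ℕ) * (w + 0) ^ (2-1) * 1) 0 := ((hlin.pow 2).const_add (v ^ 2)).const_add (u ^ 2)
  have hne : u ^ 2 + (v ^ 2 + (w + 0) ^ 2) ≠ 0 := by nlinarith [sq_nonneg (w + 0)]
  have hN : HasDerivAt (fun t : ℝ => Real.sqrt (u ^ 2 + (v ^ 2 + (w + t) ^ 2)))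
      (1 / (2 * Real.sqrt (u ^ 2 + (v ^ 2 + (w + 0) ^ 2))) * ((2:ℕ) * (w + 0) ^ (2-1) * 1)) 0 :=
    (Real.hasDerivAt_sqrt hne).comp 0 hs
  have hN0 : Real.sqrt (u ^ 2 + (v ^ 2 + (w + 0) ^ 2)) ≠ 0 := by simpa using hrpos.ne'
  have h3 := ((hlin.div hN hN0).div_const (u ^ 2 + v ^ 2)).mul_const c
  refine h3.congr_deriv ?_
  symm
  norm_num
  set r := Real.sqrt (u ^ 2 + (v ^ 2 + w ^ 2)) with hrdef
  rw [show r - w * (r⁻¹ * (1 / 2) * (2 * w)) = (u ^ 2 + v ^ 2) / r by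
    field_simp; nlinarith [hr2]]
  field_simp

private lemma auxB (u v w : ℝ) (hq : 0 < u ^ 2 + v ^ 2) :
    HasDerivAt (fun t : ℝ =>
        w / Real.sqrt ((u + t) ^ 2 + (v ^ 2 + w ^ 2)) / ((u + t) ^ 2 + v ^ 2) * (u + t))
      (w * (Real.sqrt (u ^ 2 + (v ^ 2 + w ^ 2)) ^ 2 * (u ^ 2 + v ^ 2) - u ^ 2 * (u ^ 2 + v ^ 2)
          - 2 * u ^ 2 * Real.sqrt (u ^ 2 + (v ^ 2 + w ^ 2)) ^ 2)
        / (Real.sqrt (u ^ 2 + (v ^ 2 + w ^ 2)) ^ 3 * (u ^ 2 + v ^ 2) ^ 2)) 0 := by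
  have hrpos : 0 < Real.sqrt (u ^ 2 + (v ^ 2 + w ^ 2)) :=
    Real.sqrt_pos.mpr (by nlinarith [sq_nonneg w])
  have hlin : HasDerivAt (fun t : ℝ => u + t) 1 0 := (hasDerivAt_id 0).const_add u
  have hs : HasDerivAt (fun t : ℝ => (u + t) ^ 2 + (v ^ 2 + w ^ 2))
      ((2:ℕ) * (u + 0) ^ (2-1) * 1) 0 := (hlin.pow 2).add_const (v ^ 2 + w ^ 2)
  have hne : (u + 0) ^ 2 + (v ^ 2 + w ^ 2) ≠ 0 := by nlinarith [sq_nonneg (u + 0), sq_nonneg w]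
  have hN : HasDerivAt (fun t : ℝ => Real.sqrt ((u + t) ^ 2 + (v ^ 2 + w ^ 2)))
      (1 / (2 * Real.sqrt ((u + 0) ^ 2 + (v ^ 2 + w ^ 2))) * ((2:ℕ) * (u + 0) ^ (2-1) * 1)) 0 :=
    (Real.hasDerivAt_sqrt hne).comp 0 hs
  have hN0 : Real.sqrt ((u + 0) ^ 2 + (v ^ 2 + w ^ 2)) ≠ 0 := by
    rw [Real.sqrt_ne_zero']; nlinarith [sq_nonneg (u + 0), sq_nonneg w]
  have hQ : HasDerivAt (fun t : ℝ => (u + t) ^ 2 + v ^ 2)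
      ((2:ℕ) * (u + 0) ^ (2-1) * 1) 0 := (hlin.pow 2).add_const (v ^ 2)
  have hQ0 : (u + 0) ^ 2 + v ^ 2 ≠ 0 := by nlinarith
  have h3 := (((hasDerivAt_const 0 w).div hN hN0).div hQ hQ0).mul hlin
  refine h3.congr_deriv ?_
  symm
  norm_num
  set r := Real.sqrt (u ^ 2 + (v ^ 2 + w ^ 2)) with hrdef
  field_simp
  ring

private lemma auxB' (u v w : ℝ) (hq : 0 < u ^ 2 + v ^ 2) :
    HasDerivAt (fun t : ℝ =>
        w / Real.sqrt (u ^ 2 + ((v + t) ^ 2 + w ^ 2)) / (u ^ 2 + (v + t) ^ 2) * (-(v + t)))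
      (-(w * (Real.sqrt (u ^ 2 + (v ^ 2 + w ^ 2)) ^ 2 * (u ^ 2 + v ^ 2) - v ^ 2 * (u ^ 2 + v ^ 2)
          - 2 * v ^ 2 * Real.sqrt (u ^ 2 + (v ^ 2 + w ^ 2)) ^ 2))
        / (Real.sqrt (u ^ 2 + (v ^ 2 + w ^ 2)) ^ 3 * (u ^ 2 + v ^ 2) ^ 2)) 0 := by
  have hrpos : 0 < Real.sqrt (u ^ 2 + (v ^ 2 + w ^ 2)) :=
    Real.sqrt_pos.mpr (by nlinarith [sq_nonneg w])
  have hlin : HasDerivAt (fun t : ℝ => v + t) 1 0 := (hasDerivAt_id 0).const_add v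
  have hs : HasDerivAt (fun t : ℝ => u ^ 2 + ((v + t) ^ 2 + w ^ 2))
      ((2:ℕ) * (v + 0) ^ (2-1) * 1) 0 := ((hlin.pow 2).add_const (w ^ 2)).const_add (u ^ 2)
  have hne : u ^ 2 + ((v + 0) ^ 2 + w ^ 2) ≠ 0 := by nlinarith [sq_nonneg (v + 0), sq_nonneg w]
  have hN : HasDerivAt (fun t : ℝ => Real.sqrt (u ^ 2 + ((v + t) ^ 2 + w ^ 2)))
      (1 / (2 * Real.sqrt (u ^ 2 + ((v + 0) ^ 2 + w ^ 2))) * ((2:ℕ) * (v + 0) ^ (2-1) * 1)) 0 :=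
    (Real.hasDerivAt_sqrt hne).comp 0 hs
  have hN0 : Real.sqrt (u ^ 2 + ((v + 0) ^ 2 + w ^ 2)) ≠ 0 := by
    rw [Real.sqrt_ne_zero']; nlinarith [sq_nonneg (v + 0), sq_nonneg w]
  have hQ : HasDerivAt (fun t : ℝ => u ^ 2 + (v + t) ^ 2)
      ((2:ℕ) * (v + 0) ^ (2-1) * 1) 0 := (hlin.pow 2).const_add (u ^ 2)
  have hQ0 : u ^ 2 + (v + 0) ^ 2 ≠ 0 := by nlinarith
  have h3 := (((hasDerivAt_const 0 w).div hN hN0).div hQ hQ0).mul hlin.neg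
  refine h3.congr_deriv ?_
  symm
  norm_num
  set r := Real.sqrt (u ^ 2 + (v ^ 2 + w ^ 2)) with hrdef
  field_simp
  ring


/-- **The 1-form `βᵢ = ((z−zᵢ)/rᵢ) dφᵢ` satisfies `⋆₃ dβᵢ = d(1/rᵢ)`.**
At every point `x` off the vertical line through `a`, the vector field `A` is differentiable
and its curl equals the gradient of `1/‖x − a‖`: for every cyclic permutation `(i,j,k)` of the
three coordinate directions, `∂ⱼA_k(x) − ∂_kA_j(x) = −(xᵢ − aᵢ)/‖x − a‖³`. -/
theorem diracStringField_curl
    (a : EuclideanSpace ℝ (Fin 3)) (x : EuclideanSpace ℝ (Fin 3))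
    (hx : (x 0, x 1) ≠ (a 0, a 1)) :
    DifferentiableAt ℝ (diracStringField a) x
    ∧ ∀ i j k : Fin 3,
        ((i, j, k) = (0, 1, 2) ∨ (i, j, k) = (1, 2, 0) ∨ (i, j, k) = (2, 0, 1)) →
        fderiv ℝ (fun y => diracStringField a y k) x (EuclideanSpace.single j 1)
          - fderiv ℝ (fun y => diracStringField a y j) x (EuclideanSpace.single k 1)
          = -(x i - a i) / ‖x - a‖ ^ 3 := by
  have hc : ∀ (y : EuclideanSpace ℝ (Fin 3)) (k : Fin 3), diracStringField a y k =
      ((y 2 - a 2) / ‖y - a‖ / ((y 0 - a 0) ^ 2 + (y 1 - a 1) ^ 2)) *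
        ![-(y 1 - a 1), y 0 - a 0, 0] k := fun _ _ => rfl
  have hq : 0 < (x 0 - a 0) ^ 2 + (x 1 - a 1) ^ 2 := by
    rcases (not_and_or.mp (fun h : x 0 = a 0 ∧ x 1 = a 1 => hx (by rw [h.1, h.2]))) with h | h
    · have : x 0 - a 0 ≠ 0 := sub_ne_zero.mpr h
      nlinarith [sq_nonneg (x 1 - a 1), sq_pos_of_ne_zero this]
    · have : x 1 - a 1 ≠ 0 := sub_ne_zero.mpr h
      nlinarith [sq_nonneg (x 0 - a 0), sq_pos_of_ne_zero this]
  have hxa : x - a ≠ 0 := by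
    intro h
    have h0 : x 0 - a 0 = 0 := by
      have := congrFun (congrArg (fun z : EuclideanSpace ℝ (Fin 3) => (z : Fin 3 → ℝ)) h) 0
      simpa using this
    have h1 : x 1 - a 1 = 0 := by
      have := congrFun (congrArg (fun z : EuclideanSpace ℝ (Fin 3) => (z : Fin 3 → ℝ)) h) 1
      simpa using this
    nlinarith
  have hrn : ‖x - a‖ ≠ 0 := norm_ne_zero_iff.mpr hxa
  -- differentiability of coordinate pieces
  have dproj : ∀ i : Fin 3, DifferentiableAt ℝ (fun y : EuclideanSpace ℝ (Fin 3) => y i - a i) x :=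
    fun i => ((EuclideanSpace.proj (𝕜 := ℝ) i).differentiableAt).sub_const (a i)
  have dn : DifferentiableAt ℝ (fun y : EuclideanSpace ℝ (Fin 3) => ‖y - a‖) x :=
    DifferentiableAt.norm ℝ (differentiableAt_id.sub_const a) hxa
  have dc : DifferentiableAt ℝ (fun y : EuclideanSpace ℝ (Fin 3) =>
      (y 2 - a 2) / ‖y - a‖ / ((y 0 - a 0) ^ 2 + (y 1 - a 1) ^ 2)) x :=
    mydiv (mydiv (dproj 2) dn hrn) (((dproj 0).pow 2).add ((dproj 1).pow 2)) hq.ne'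
  have dg1 : DifferentiableAt ℝ (fun y => diracStringField a y 1) x := by
    have : (fun y => diracStringField a y 1) = fun y : EuclideanSpace ℝ (Fin 3) =>
        ((y 2 - a 2) / ‖y - a‖ / ((y 0 - a 0) ^ 2 + (y 1 - a 1) ^ 2)) * (y 0 - a 0) := by
      funext y; rw [hc]; simp
    rw [this]; exact dc.mul (dproj 0)
  have dg0 : DifferentiableAt ℝ (fun y => diracStringField a y 0) x := by
    have : (fun y => diracStringField a y 0) = fun y : EuclideanSpace ℝ (Fin 3) =>
        ((y 2 - a 2) / ‖y - a‖ / ((y 0 - a 0) ^ 2 + (y 1 - a 1) ^ 2)) * (-(y 1 - a 1)) := by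
      funext y; rw [hc]; simp
    rw [this]; exact dc.mul (dproj 1).neg
  have hzero : (fun y => diracStringField a y 2) = fun _ : EuclideanSpace ℝ (Fin 3) => (0:ℝ) := by
    funext y; rw [hc]; simp
  constructor
  · -- differentiability of the full field
    have dvec' : DifferentiableAt ℝ
        (fun y : EuclideanSpace ℝ (Fin 3) => ![-(y 1 - a 1), y 0 - a 0, (0:ℝ)]) x := by
      rw [differentiableAt_pi]
      intro i
      fin_cases i
      · simpa using (dproj 1).neg
      · simpa using (dproj 0)
      · simpa using differentiableAt_const (0:ℝ)
    have dvec : DifferentiableAt ℝ (fun y : EuclideanSpace ℝ (Fin 3) =>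
        ((WithLp.equiv 2 (Fin 3 → ℝ)).symm ![-(y 1 - a 1), y 0 - a 0, 0] :
          EuclideanSpace ℝ (Fin 3))) x :=
      ((PiLp.continuousLinearEquiv 2 ℝ (fun _ : Fin 3 => ℝ)).symm.differentiableAt).comp x dvec'
    exact dc.smul dvec
  · rintro i j k (h | h | h) <;> simp only [Prod.mk.injEq] at h <;>
      obtain ⟨rfl, rfl, rfl⟩ := h
    · -- (0,1,2): ∂₁A₂ - ∂₂A₁ = -(x₀-a₀)/r³
      have h21 : fderiv ℝ (fun y => diracStringField a y 1) x
          (EuclideanSpace.single (2 : Fin 3) (1:ℝ)) =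
          (x 0 - a 0) / Real.sqrt ((x 0 - a 0) ^ 2 + ((x 1 - a 1) ^ 2 + (x 2 - a 2) ^ 2)) ^ 3 := by
        refine key dg1 ?_
        have hfun : (fun t : ℝ =>
            diracStringField a (x + t • EuclideanSpace.single (2 : Fin 3) (1:ℝ)) 1) =
            fun t : ℝ => (x 2 - a 2 + t) /
              Real.sqrt ((x 0 - a 0) ^ 2 + ((x 1 - a 1) ^ 2 + (x 2 - a 2 + t) ^ 2)) /
              ((x 0 - a 0) ^ 2 + (x 1 - a 1) ^ 2) * (x 0 - a 0) := by
          funext t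
          rw [hc, norm_coords]
          simp [EuclideanSpace.single_apply]
          try rw [show x 2 + t - a 2 = x 2 - a 2 + t by ring]
          try first | rfl | exact Or.inl rfl | exact Or.inl (by ring) | ring
        rw [hfun]
        exact auxA (x 0 - a 0) (x 1 - a 1) (x 2 - a 2) (x 0 - a 0) hq
      rw [hzero, h21, fderiv_fun_const, norm_coords]
      simp
      try ring
    · -- (1,2,0): ∂₂A₀ - ∂₀A₂ = -(x₁-a₁)/r³
      have h02 : fderiv ℝ (fun y => diracStringField a y 0) x
          (EuclideanSpace.single (2 : Fin 3) (1:ℝ)) =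
          (-(x 1 - a 1)) / Real.sqrt ((x 0 - a 0) ^ 2 + ((x 1 - a 1) ^ 2 + (x 2 - a 2) ^ 2)) ^ 3 := by
        refine key dg0 ?_
        have hfun : (fun t : ℝ =>
            diracStringField a (x + t • EuclideanSpace.single (2 : Fin 3) (1:ℝ)) 0) =
            fun t : ℝ => (x 2 - a 2 + t) /
              Real.sqrt ((x 0 - a 0) ^ 2 + ((x 1 - a 1) ^ 2 + (x 2 - a 2 + t) ^ 2)) /
              ((x 0 - a 0) ^ 2 + (x 1 - a 1) ^ 2) * (-(x 1 - a 1)) := by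
          funext t
          rw [hc, norm_coords]
          simp [EuclideanSpace.single_apply]
          try rw [show x 2 + t - a 2 = x 2 - a 2 + t by ring]
          try first | rfl | exact Or.inl rfl | exact Or.inl (by ring) | ring
        rw [hfun]
        exact auxA (x 0 - a 0) (x 1 - a 1) (x 2 - a 2) (-(x 1 - a 1)) hq
      rw [hzero, h02, fderiv_fun_const, norm_coords]
      simp
      try ring
    · -- (2,0,1): ∂₀A₁ - ∂₁A₀ = -(x₂-a₂)/r³
      have h10 : fderiv ℝ (fun y => diracStringField a y 1) x
          (EuclideanSpace.single (0 : Fin 3) (1:ℝ)) =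
          ((x 2 - a 2) * (Real.sqrt ((x 0 - a 0) ^ 2 + ((x 1 - a 1) ^ 2 + (x 2 - a 2) ^ 2)) ^ 2 *
              ((x 0 - a 0) ^ 2 + (x 1 - a 1) ^ 2) - (x 0 - a 0) ^ 2 * ((x 0 - a 0) ^ 2 + (x 1 - a 1) ^ 2)
              - 2 * (x 0 - a 0) ^ 2 * Real.sqrt ((x 0 - a 0) ^ 2 + ((x 1 - a 1) ^ 2 + (x 2 - a 2) ^ 2)) ^ 2)
            / (Real.sqrt ((x 0 - a 0) ^ 2 + ((x 1 - a 1) ^ 2 + (x 2 - a 2) ^ 2)) ^ 3 *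
              ((x 0 - a 0) ^ 2 + (x 1 - a 1) ^ 2) ^ 2)) := by
        refine key dg1 ?_
        have hfun : (fun t : ℝ =>
            diracStringField a (x + t • EuclideanSpace.single (0 : Fin 3) (1:ℝ)) 1) =
            fun t : ℝ => (x 2 - a 2) /
              Real.sqrt ((x 0 - a 0 + t) ^ 2 + ((x 1 - a 1) ^ 2 + (x 2 - a 2) ^ 2)) /
              ((x 0 - a 0 + t) ^ 2 + (x 1 - a 1) ^ 2) * (x 0 - a 0 + t) := by
          funext t
          rw [hc, norm_coords]
          simp [EuclideanSpace.single_apply]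
          try rw [show x 0 + t - a 0 = x 0 - a 0 + t by ring]
          try first | rfl | exact Or.inl rfl | exact Or.inl (by ring) | ring
        rw [hfun]
        exact auxB (x 0 - a 0) (x 1 - a 1) (x 2 - a 2) hq
      have h01 : fderiv ℝ (fun y => diracStringField a y 0) x
          (EuclideanSpace.single (1 : Fin 3) (1:ℝ)) =
          (-((x 2 - a 2) * (Real.sqrt ((x 0 - a 0) ^ 2 + ((x 1 - a 1) ^ 2 + (x 2 - a 2) ^ 2)) ^ 2 *
              ((x 0 - a 0) ^ 2 + (x 1 - a 1) ^ 2) - (x 1 - a 1) ^ 2 * ((x 0 - a 0) ^ 2 + (x 1 - a 1) ^ 2)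
              - 2 * (x 1 - a 1) ^ 2 * Real.sqrt ((x 0 - a 0) ^ 2 + ((x 1 - a 1) ^ 2 + (x 2 - a 2) ^ 2)) ^ 2))
            / (Real.sqrt ((x 0 - a 0) ^ 2 + ((x 1 - a 1) ^ 2 + (x 2 - a 2) ^ 2)) ^ 3 *
              ((x 0 - a 0) ^ 2 + (x 1 - a 1) ^ 2) ^ 2)) := by
        refine key dg0 ?_
        have hfun : (fun t : ℝ =>
            diracStringField a (x + t • EuclideanSpace.single (1 : Fin 3) (1:ℝ)) 0) =
            fun t : ℝ => (x 2 - a 2) /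
              Real.sqrt ((x 0 - a 0) ^ 2 + ((x 1 - a 1 + t) ^ 2 + (x 2 - a 2) ^ 2)) /
              ((x 0 - a 0) ^ 2 + (x 1 - a 1 + t) ^ 2) * (-(x 1 - a 1 + t)) := by
          funext t
          rw [hc, norm_coords]
          simp [EuclideanSpace.single_apply]
          try rw [show x 1 + t - a 1 = x 1 - a 1 + t by ring]
          try first | rfl | exact Or.inl rfl | exact Or.inl (by ring) | ring
        rw [hfun]
        exact auxB' (x 0 - a 0) (x 1 - a 1) (x 2 - a 2) hq
      rw [h10, h01, norm_coords]
      have hr0 : Real.sqrt ((x 0 - a 0) ^ 2 + ((x 1 - a 1) ^ 2 + (x 2 - a 2) ^ 2)) ≠ 0 := by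
        rw [Real.sqrt_ne_zero']; nlinarith [sq_nonneg (x 2 - a 2)]
      field_simp
      ring
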